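/- arXiv:1212.4482 — 2 statements merged into one kernel-verified Lean document; each statement's English description precedes it below -/
import Mathlib

section
/- Let j : ℝ → ℝ be differentiable with ν * j(t) ≤ j'(t) * t for all |t| > M, where ν > 0 and M > 0. Then for all t with |t| > M, j(t) ≥ l * |t|^ν where l = min(j(M), j(-M)) / M^ν. -/
/-! On each half-line the condition `ν j(t) ≤ t j'(t)` says exactly that `t ↦ j(t) / tᵛ` is
nondecreasing for `t ≥ M`, since its derivative is `t^(-ν-1) (t j'(t) - ν j(t))`. Hence
`j(t) ≥ j(M) (t / M)ᵛ` for `t > M`; the case `t < -M` follows by applying this to `t ↦ j(-t)`. -/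

open Real Set

section HalfLine

variable {f : ℝ → ℝ} {ν M : ℝ}

theorem monotoneOn_mul_rpow_neg_of_le_deriv_mul (hM : 0 < M) (hf : DifferentiableOn ℝ f (Ici M))
    (h : ∀ s, M < s → ν * f s ≤ deriv f s * s) :
    MonotoneOn (fun s ↦ f s * s ^ (-ν)) (Ici M) := by
  have hpos : ∀ s ∈ Ici M, 0 < s := fun s hs ↦ hM.trans_le hs
  have hderiv : ∀ s ∈ Ioi M, HasDerivAt (fun s ↦ f s * s ^ (-ν))
      (deriv f s * s ^ (-ν) + f s * (-ν * s ^ (-ν - 1))) s := fun s hs ↦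
    ((hf.differentiableAt (Ici_mem_nhds hs)).hasDerivAt).mul
      (hasDerivAt_rpow_const (Or.inl (hpos s (mem_Ici.2 hs.le)).ne'))
  refine monotoneOn_of_hasDerivWithinAt_nonneg (convex_Ici M)
    (hf.continuousOn.mul fun s hs ↦
      (continuousAt_rpow_const _ _ (Or.inl (hpos s hs).ne')).continuousWithinAt)
    (fun s hs ↦ (hderiv s (by simpa using hs)).hasDerivWithinAt) fun s hs ↦ ?_
  rw [interior_Ici] at hs
  have hs0 : 0 < s := hM.trans hs
  have hsplit : s ^ (-ν) = s ^ (-ν - 1) * s := by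
    rw [← rpow_add_one hs0.ne']; ring_nf
  calc (0 : ℝ) ≤ s ^ (-ν - 1) * (deriv f s * s - ν * f s) :=
        mul_nonneg (rpow_pos_of_pos hs0 _).le (sub_nonneg.mpr (h s hs))
    _ = deriv f s * s ^ (-ν) + f s * (-ν * s ^ (-ν - 1)) := by rw [hsplit]; ring

theorem div_rpow_mul_rpow_le_of_le_deriv_mul (hM : 0 < M) (hf : DifferentiableOn ℝ f (Ici M))
    (h : ∀ s, M < s → ν * f s ≤ deriv f s * s) {t : ℝ} (ht : M ≤ t) :
    f M / M ^ ν * t ^ ν ≤ f t := by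
  have ht0 : 0 < t := hM.trans_le ht
  have hmono := monotoneOn_mul_rpow_neg_of_le_deriv_mul hM hf h self_mem_Ici ht ht
  calc f M / M ^ ν * t ^ ν = f M * M ^ (-ν) * t ^ ν := by rw [rpow_neg hM.le, div_eq_mul_inv]
    _ ≤ f t * t ^ (-ν) * t ^ ν := mul_le_mul_of_nonneg_right hmono (rpow_nonneg ht0.le _)
    _ = f t := by rw [mul_assoc, ← rpow_add ht0, neg_add_cancel, rpow_zero, mul_one]

end HalfLine

theorem stmt_1_general (j : ℝ → ℝ) (hj : Differentiable ℝ j) (ν M : ℝ) (hM : 0 < M)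
    (hAR : ∀ t : ℝ, M < |t| → ν * j t ≤ deriv j t * t) :
    ∀ t : ℝ, M < |t| → j t ≥ (min (j M) (j (-M)) / M ^ ν) * |t| ^ ν := by
  have habs : ∀ s, M < s → M < |s| ∧ M < |-s| := fun s hs ↦ by
    rw [abs_neg, abs_of_pos (hM.trans hs)]; exact ⟨hs, hs⟩
  intro t ht
  rcases le_or_gt 0 t with htpos | htneg
  · rw [abs_of_nonneg htpos] at ht ⊢
    calc min (j M) (j (-M)) / M ^ ν * t ^ ν ≤ j M / M ^ ν * t ^ ν := by
          gcongr; exact min_le_left _ _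
      _ ≤ j t := div_rpow_mul_rpow_le_of_le_deriv_mul hM hj.differentiableOn
          (fun s hs ↦ hAR s (habs s hs).1) ht.le
  · rw [abs_of_neg htneg] at ht ⊢
    have hreflect : ∀ s, M < s → ν * j (-s) ≤ deriv (fun x ↦ j (-x)) s * s := fun s hs ↦ by
      rw [deriv_comp_neg, neg_mul_comm]; exact hAR (-s) (habs s hs).2
    calc min (j M) (j (-M)) / M ^ ν * (-t) ^ ν ≤ j (-M) / M ^ ν * (-t) ^ ν := by
          gcongr
          · exact rpow_nonneg (hM.trans ht).le _
          · exact min_le_right _ _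
      _ ≤ j (-(-t)) := div_rpow_mul_rpow_le_of_le_deriv_mul hM
          (hj.comp differentiable_neg).differentiableOn hreflect ht.le
      _ = j t := by rw [neg_neg]

theorem stmt_1 (j : ℝ → ℝ) (hj : Differentiable ℝ j) (ν M : ℝ) (hν : 0 < ν) (hM : 0 < M)
    (hAR : ∀ t : ℝ, M < |t| → ν * j t ≤ deriv j t * t) :
    ∀ t : ℝ, M < |t| → j t ≥ (min (j M) (j (-M)) / M ^ ν) * |t| ^ ν :=
  stmt_1_general j hj ν M hM hAR
end

section
/- Suppose j : ℝ → ℝ satisfies: (i) limsup_{t→0} j(t)/|t|^p ≤ −μ for some μ > 0 and p > 1, and (ii) |j(t)| ≤ a*|t| + c*|t|^r for all t, with a, c > 0 and r > p. Then there exists γ > 0 and θ with p < θ ≤ r such that j(t) ≤ −(μ/2)*|t|^p + γ*|t|^θ for all t ∈ ℝ. -/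
/-!
Near `0` the limsup hypothesis gives `j t < -(μ/2)|t|^p` on a punctured ball of radius `δ`,
and at `0` the growth bound forces `j 0 = 0`. Away from `0`, i.e. for `|t| ≥ δ`, every power
`|t|^s` with `s ≤ r` is at most `δ^(s-r) |t|^r`, so the growth bound together with the missing
term `(μ/2)|t|^p` is absorbed by `γ |t|^r` for a large `γ`; thus `θ = r` works.
-/

open Filter Topology

lemma Filter.isBoundedUnder_le_of_limsup_lt_zero {α : Type*} {F : Filter α} {u : α → ℝ}
    (h : limsup u F < 0) : F.IsBoundedUnder (· ≤ ·) u := by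
  by_contra hu
  -- an unbounded `limsup` is `sInf ∅`, which is the junk value `0` in `ℝ`
  have hempty : {b : ℝ | ∀ᶠ t in F, u t ≤ b} = ∅ :=
    Set.eq_empty_of_forall_notMem fun b hb => hu ⟨b, hb⟩
  rw [limsup_eq, hempty, Real.sInf_empty] at h
  exact lt_irrefl 0 h

lemma exists_pos_forall_lt_mul_rpow_of_limsup_le {j : ℝ → ℝ} {μ p : ℝ} (hμ : 0 < μ)
    (hlimsup : limsup (fun t : ℝ => j t / |t| ^ p) (𝓝[≠] 0) ≤ -μ) :
    ∃ δ > 0, ∀ t : ℝ, t ≠ 0 → |t| < δ → j t < -(μ / 2) * |t| ^ p := by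
  have hlt : limsup (fun t : ℝ => j t / |t| ^ p) (𝓝[≠] 0) < -(μ / 2) := by linarith
  have hev := eventually_lt_of_limsup_lt hlt
    (isBoundedUnder_le_of_limsup_lt_zero (by linarith))
  obtain ⟨δ, hδ, hball⟩ := Metric.mem_nhdsWithin_iff.mp hev
  refine ⟨δ, hδ, fun t ht htδ => ?_⟩
  have hmem : t ∈ Metric.ball 0 δ ∩ {0}ᶜ := ⟨by simpa using htδ, ht⟩
  exact (div_lt_iff₀ (Real.rpow_pos_of_pos (abs_pos.mpr ht) p)).mp (hball hmem)

lemma Real.rpow_le_rpow_sub_mul_rpow {x δ s r : ℝ} (hδ : 0 < δ) (hδx : δ ≤ x) (hsr : s ≤ r) :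
    x ^ s ≤ δ ^ (s - r) * x ^ r :=
  calc x ^ s = x ^ (s - r) * x ^ r := by
        rw [← Real.rpow_add (hδ.trans_le hδx), sub_add_cancel]
    _ ≤ δ ^ (s - r) * x ^ r :=
        mul_le_mul_of_nonneg_right (Real.rpow_le_rpow_of_nonpos hδ hδx (sub_nonpos.mpr hsr))
          (Real.rpow_nonneg (hδ.le.trans hδx) r)

theorem stmt_3 (j : ℝ → ℝ) (μ p r a c : ℝ) (hμ : 0 < μ) (hp : 1 < p) (hr : p < r)
    (ha : 0 < a) (hc : 0 < c)
    (hlimsup : Filter.limsup (fun t : ℝ => j t / |t| ^ p) (nhdsWithin 0 {(0 : ℝ)}ᶜ) ≤ -μ)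
    (hgrowth : ∀ t : ℝ, |j t| ≤ a * |t| + c * |t| ^ r) :
    ∃ γ : ℝ, 0 < γ ∧ ∃ θ : ℝ, p < θ ∧ θ ≤ r ∧
      ∀ t : ℝ, j t ≤ -(μ / 2) * |t| ^ p + γ * |t| ^ θ := by
  obtain ⟨δ, hδ, hnear⟩ := exists_pos_forall_lt_mul_rpow_of_limsup_le hμ hlimsup
  refine ⟨a * δ ^ (1 - r) + c + μ / 2 * δ ^ (p - r), by positivity, r, hr, le_rfl, fun t => ?_⟩
  have hj : j t ≤ a * |t| + c * |t| ^ r := (le_abs_self _).trans (hgrowth t)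
  rcases eq_or_ne t 0 with rfl | ht
  · have hr0 : (0 : ℝ) ^ r = 0 := Real.zero_rpow (by linarith)
    simp only [abs_zero, hr0, mul_zero, add_zero, Real.zero_rpow (by linarith : p ≠ 0)] at hj ⊢
    exact hj
  rcases lt_or_ge |t| δ with htδ | hδt
  · have : 0 ≤ (a * δ ^ (1 - r) + c + μ / 2 * δ ^ (p - r)) * |t| ^ r := by positivity
    linarith [hnear t ht htδ]
  · have h1 : |t| ≤ δ ^ (1 - r) * |t| ^ r := by
      simpa using Real.rpow_le_rpow_sub_mul_rpow hδ hδt (hp.trans hr).le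
    have hp' := Real.rpow_le_rpow_sub_mul_rpow hδ hδt hr.le
    have : a * |t| ≤ a * (δ ^ (1 - r) * |t| ^ r) := mul_le_mul_of_nonneg_left h1 ha.le
    have : μ / 2 * |t| ^ p ≤ μ / 2 * (δ ^ (p - r) * |t| ^ r) := by gcongr
    linarith
end
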